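/- There exists a constant C > 0 such that for every ε ∈ (0,∞) and every x ∈ [0,b], if f_ε is a C² solution of HJB(ε) and f₀ is a C² solution of HJB(0), then f₀(x) ≤ f_ε(x) ≤ f₀(x) + C·ε; that is, f_ε converges to the risk-neutral solution f₀ uniformly on [0,b] with rate O(ε) as ε → 0. -/

import Mathlib

/-!
Both bounds are instances of one comparison principle: if `u` solves HJB(εᵤ) and `v`
solves HJB(εᵥ) with `εᵤ, εᵥ ≥ 0`, then `u ≤ v + σ²εᵤr²/(2ϱ)`. To see it, maximise
`u - v - ηx²` over `[0,b]`. The maximiser `x₀` is not `b` (there `u' = v' = r`), so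
`u' - v' = 2ηx₀` and `u'' - v'' ≤ 2η` at `x₀`. Since `u' ≤ r`, this forces `v'(x₀) < r`, and
there the equation for `v` holds with equality: either `0 < v'` in the interior, or
`v'(x₀) = 0`, where a strict inequality would make `v` flat all the way to `b` (the residual
`h - ϱv` only grows along a flat piece, as `h` is strictly increasing), contradicting
`v'(b) = r`. Subtracting the equation for `v` from the inequality for `u` gives
`ϱ(u - v)(x₀) ≤ σ²εᵤr²/2 + O(η)`; let `η → 0`.
-/

open Set

/-- The Hamiltonian H_ε(x,y,z) = (2/σ²)(m·z + ½σ²ε·z² − ϱ·y + h(x)). -/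
noncomputable def Hfun (σ ϱ m ε : ℝ) (h : ℝ → ℝ) (x y z : ℝ) : ℝ :=
  (2 / σ ^ 2) * (m * z + (1 / 2) * σ ^ 2 * ε * z ^ 2 - ϱ * y + h x)

/-- f (with first and second derivatives f', f'') is a C² solution of HJB(ε):
min{f'' + H_ε(x,f,f'), f', r − f'} = 0 on (0,b), f'(0) = 0, f'(b) = r. -/
def IsHJBSolution (b σ ϱ r m ε : ℝ) (h f f' f'' : ℝ → ℝ) : Prop :=
  (∀ x ∈ Icc (0:ℝ) b, HasDerivWithinAt f (f' x) (Icc (0:ℝ) b) x) ∧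
  (∀ x ∈ Icc (0:ℝ) b, HasDerivWithinAt f' (f'' x) (Icc (0:ℝ) b) x) ∧
  ContinuousOn f'' (Icc (0:ℝ) b) ∧
  (∀ x ∈ Ioo (0:ℝ) b,
    min (min (f'' x + Hfun σ ϱ m ε h x (f x) (f' x)) (f' x)) (r - f' x) = 0) ∧
  f' 0 = 0 ∧ f' b = r

open Filter Topology

theorem min_min_eq_iff {α : Type*} [LinearOrder α] {a b c d : α} :
    min (min a b) c = d ↔ d ≤ a ∧ d ≤ b ∧ d ≤ c ∧ (a = d ∨ b = d ∨ c = d) := by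
  grind

theorem deriv_nonneg_of_isMaxOn_right {a b d : ℝ} {ψ : ℝ → ℝ} (hab : a < b)
    (hψ : HasDerivWithinAt ψ d (Icc a b) b) (hmax : IsMaxOn ψ (Icc a b) b) : 0 ≤ d := by
  have hcone : a - b ∈ posTangentConeAt (Icc a b) b :=
    sub_mem_posTangentConeAt_of_segment_subset (segment_symm ℝ a b ▸ segment_subset_Icc hab.le)
  have := hmax.localize.hasFDerivWithinAt_nonpos hψ.hasFDerivWithinAt hcone
  simp only [ContinuousLinearMap.toSpanSingleton_apply, smul_eq_mul] at this
  nlinarith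

theorem deriv2_nonpos_of_isMaxOn {a b x₀ d₂ : ℝ} {ψ ψ' : ℝ → ℝ}
    (hψ : ∀ x ∈ Icc a b, HasDerivWithinAt ψ (ψ' x) (Icc a b) x)
    (hψ' : HasDerivWithinAt ψ' d₂ (Icc a b) x₀) (hx₀ : x₀ ∈ Ico a b)
    (hmax : IsMaxOn ψ (Icc a b) x₀) (hd : ψ' x₀ = 0) : d₂ ≤ 0 := by
  -- Otherwise `ψ' > 0` just right of `x₀`, so `ψ` increases there.
  by_contra! hpos
  have hIcc : Icc a b ∈ 𝓝[>] x₀ :=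
    mem_of_superset (Ioo_mem_nhdsGT hx₀.2)
      (Ioo_subset_Icc_self.trans (Icc_subset_Icc_left hx₀.1))
  have hslope : Tendsto (slope ψ' x₀) (𝓝[>] x₀) (𝓝 d₂) :=
    (hasDerivWithinAt_iff_tendsto_slope' (lt_irrefl x₀)).1 (hψ'.mono_of_mem_nhdsWithin hIcc)
  have hψ'pos : ∀ᶠ y in 𝓝[>] x₀, 0 < ψ' y := by
    filter_upwards [hslope.eventually (eventually_gt_nhds hpos), self_mem_nhdsWithin] with y hy hxy
    rw [slope_def_field, hd, sub_zero] at hy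
    exact (div_pos_iff_of_pos_right (sub_pos.2 hxy)).1 hy
  obtain ⟨u, hxu, hu⟩ := (mem_nhdsGT_iff_exists_mem_Ioc_Ioo_subset hx₀.2).1 hψ'pos
  obtain ⟨y, hx₀y, hyu⟩ := exists_between hxu.1
  have hsub : Icc x₀ y ⊆ Icc a b := Icc_subset_Icc hx₀.1 (hyu.le.trans hxu.2)
  obtain ⟨ξ, hξ, hslopeξ⟩ := exists_hasDerivAt_eq_slope ψ ψ' hx₀y
    (fun z hz => (hψ z (hsub hz)).continuousWithinAt.mono hsub)
    (fun z hz => (hψ z (hsub (Ioo_subset_Icc_self hz))).hasDerivAt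
      (Icc_mem_nhds (hx₀.1.trans_lt hz.1) (hz.2.trans (hyu.trans_le hxu.2))))
  have hξpos : 0 < ψ' ξ := hu ⟨hξ.1, hξ.2.trans hyu⟩
  rw [hslopeξ, div_pos_iff_of_pos_right (sub_pos.2 hx₀y), sub_pos] at hξpos
  exact (hmax (hsub (right_mem_Icc.2 hx₀y.le))).not_gt hξpos

noncomputable def hjbResidual (σ ϱ m ε : ℝ) (h f f' f'' : ℝ → ℝ) (x : ℝ) : ℝ :=
  f'' x + Hfun σ ϱ m ε h x (f x) (f' x)

section Residual

variable {σ ϱ m ε x : ℝ} {h f f' f'' : ℝ → ℝ}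

theorem hjbResidual_eq (hσ : σ ≠ 0) :
    σ ^ 2 / 2 * hjbResidual σ ϱ m ε h f f' f'' x =
      σ ^ 2 / 2 * f'' x + m * f' x + σ ^ 2 * ε / 2 * f' x ^ 2 - ϱ * f x + h x := by
  unfold hjbResidual Hfun
  field_simp
  ring

theorem hjbResidual_pos_iff_of_flat (hσ : σ ≠ 0) (h₁ : f' x = 0) (h₂ : f'' x = 0) :
    0 < hjbResidual σ ϱ m ε h f f' f'' x ↔ ϱ * f x < h x := by
  rw [← mul_pos_iff_of_pos_left (by positivity : 0 < σ ^ 2 / 2), hjbResidual_eq hσ, h₁, h₂]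
  constructor <;> intro <;> linarith

theorem hjbResidual_nonneg_iff_of_flat (hσ : σ ≠ 0) (h₁ : f' x = 0) (h₂ : f'' x = 0) :
    0 ≤ hjbResidual σ ϱ m ε h f f' f'' x ↔ ϱ * f x ≤ h x := by
  rw [← mul_nonneg_iff_of_pos_left (by positivity : 0 < σ ^ 2 / 2), hjbResidual_eq hσ, h₁,
    h₂]
  constructor <;> intro <;> linarith

end Residual

namespace IsHJBSolution

variable {b σ ϱ r m ε x : ℝ} {h f f' f'' : ℝ → ℝ}

local notation "R" => hjbResidual σ ϱ m ε h f f' f''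

theorem deriv_left (S : IsHJBSolution b σ ϱ r m ε h f f' f'') : f' 0 = 0 := S.2.2.2.2.1

theorem deriv_right (S : IsHJBSolution b σ ϱ r m ε h f f' f'') : f' b = r := S.2.2.2.2.2

theorem hasDerivWithinAt (S : IsHJBSolution b σ ϱ r m ε h f f' f'') (hx : x ∈ Icc 0 b) :
    HasDerivWithinAt f (f' x) (Icc 0 b) x := S.1 x hx

theorem hasDerivWithinAt_deriv (S : IsHJBSolution b σ ϱ r m ε h f f' f'') (hx : x ∈ Icc 0 b) :
    HasDerivWithinAt f' (f'' x) (Icc 0 b) x := S.2.1 x hx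

theorem hasDerivAt (S : IsHJBSolution b σ ϱ r m ε h f f' f'') (hx : x ∈ Ioo 0 b) :
    HasDerivAt f (f' x) x :=
  (S.hasDerivWithinAt (Ioo_subset_Icc_self hx)).hasDerivAt (Icc_mem_nhds hx.1 hx.2)

theorem hasDerivAt_deriv (S : IsHJBSolution b σ ϱ r m ε h f f' f'') (hx : x ∈ Ioo 0 b) :
    HasDerivAt f' (f'' x) x :=
  (S.hasDerivWithinAt_deriv (Ioo_subset_Icc_self hx)).hasDerivAt (Icc_mem_nhds hx.1 hx.2)

theorem continuousOn (S : IsHJBSolution b σ ϱ r m ε h f f' f'') : ContinuousOn f (Icc 0 b) :=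
  fun _ hx => (S.hasDerivWithinAt hx).continuousWithinAt

theorem continuousOn_deriv (S : IsHJBSolution b σ ϱ r m ε h f f' f'') :
    ContinuousOn f' (Icc 0 b) :=
  fun _ hx => (S.hasDerivWithinAt_deriv hx).continuousWithinAt

theorem continuousOn_residual (S : IsHJBSolution b σ ϱ r m ε h f f' f'')
    (hh : ContinuousOn h (Icc 0 b)) : ContinuousOn R (Icc 0 b) := by
  have := S.continuousOn
  have := S.continuousOn_deriv
  have := S.2.2.1
  unfold hjbResidual Hfun
  fun_prop

theorem variational_inequality (S : IsHJBSolution b σ ϱ r m ε h f f' f'') (hx : x ∈ Ioo 0 b) :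
    0 ≤ R x ∧ 0 ≤ f' x ∧ f' x ≤ r ∧ (R x = 0 ∨ f' x = 0 ∨ f' x = r) := by
  obtain ⟨hR, hd, hr, hcases⟩ := min_min_eq_iff.1 (S.2.2.2.1 x hx)
  refine ⟨hR, hd, sub_nonneg.1 hr, ?_⟩
  rcases hcases with e | e | e
  · exact .inl e
  · exact .inr (.inl e)
  · exact .inr (.inr (sub_eq_zero.1 e).symm)

theorem residual_eq_zero_of_mem_Ioo (S : IsHJBSolution b σ ϱ r m ε h f f' f'')
    (hx : x ∈ Ioo 0 b) (h₀ : 0 < f' x) (hr : f' x < r) : R x = 0 := by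
  obtain ⟨-, -, -, e | e | e⟩ := S.variational_inequality hx
  · exact e
  · exact absurd e h₀.ne'
  · exact absurd e hr.ne

theorem deriv_eq_zero_of_residual_pos (S : IsHJBSolution b σ ϱ r m ε h f f' f'')
    (hx : x ∈ Ioo 0 b) (hR : 0 < R x) (hr : f' x < r) : f' x = 0 := by
  obtain ⟨-, -, -, e | e | e⟩ := S.variational_inequality hx
  · exact absurd e hR.ne'
  · exact e
  · exact absurd e hr.ne

theorem deriv_mem_Icc (S : IsHJBSolution b σ ϱ r m ε h f f' f'') (hr : 0 ≤ r)
    (hx : x ∈ Icc 0 b) : f' x ∈ Icc 0 r := by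
  rcases hx.1.eq_or_lt with rfl | h₀
  · rw [S.deriv_left]; exact ⟨le_rfl, hr⟩
  rcases hx.2.eq_or_lt with rfl | hb
  · rw [S.deriv_right]; exact ⟨hr, le_rfl⟩
  obtain ⟨-, h₁, h₂, -⟩ := S.variational_inequality ⟨h₀, hb⟩
  exact ⟨h₁, h₂⟩

theorem residual_nonneg (S : IsHJBSolution b σ ϱ r m ε h f f' f'') (hb : 0 < b)
    (hh : ContinuousOn h (Icc 0 b)) (hx : x ∈ Icc 0 b) : 0 ≤ R x :=
  ContinuousWithinAt.closure_le (by rwa [closure_Ioo hb.ne]) continuousWithinAt_const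
    ((S.continuousOn_residual hh x hx).mono Ioo_subset_Icc_self)
    fun _ hy => (S.variational_inequality hy).1

theorem deriv2_eq_zero_of_deriv_eq_zero (S : IsHJBSolution b σ ϱ r m ε h f f' f'') (hr : 0 ≤ r)
    (hx : x ∈ Ioo 0 b) (h₀ : f' x = 0) : f'' x = 0 := by
  have hmin : IsLocalMin f' x := by
    filter_upwards [Icc_mem_nhds hx.1 hx.2] with y hy
    rw [h₀]
    exact (S.deriv_mem_Icc hr hy).1
  exact hmin.hasDerivAt_eq_zero (S.hasDerivAt_deriv hx)

theorem eq_of_forall_deriv_eq_zero (S : IsHJBSolution b σ ϱ r m ε h f f' f'') {y z : ℝ}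
    (hy : 0 ≤ y) (hyz : y ≤ z) (hz : z ≤ b) (h₀ : ∀ t ∈ Ioo y z, f' t = 0) :
    f z = f y := by
  rcases hyz.eq_or_lt with rfl | hyz
  · rfl
  have hsub : Icc y z ⊆ Icc 0 b := Icc_subset_Icc hy hz
  obtain ⟨t, ht, hslope⟩ := exists_hasDerivAt_eq_slope f f' hyz (S.continuousOn.mono hsub)
    fun t ht => S.hasDerivAt ⟨hy.trans_lt ht.1, ht.2.trans_le hz⟩
  rw [h₀ t ht, eq_comm, div_eq_zero_iff, sub_eq_zero] at hslope
  exact hslope.resolve_right (sub_ne_zero.2 hyz.ne')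

theorem exists_Ioo_deriv_eq_zero (S : IsHJBSolution b σ ϱ r m ε h f f' f'') (hr : 0 < r)
    (hh : ContinuousOn h (Icc 0 b)) (hx : x ∈ Ico 0 b) (h₀ : f' x = 0) (hR : 0 < R x) :
    ∃ u ∈ Ioc x b, ∀ y ∈ Ioo x u, f' y = 0 := by
  have hxIcc : x ∈ Icc 0 b := Ico_subset_Icc_self hx
  have hle : 𝓝[>] x ≤ 𝓝[Icc 0 b] x := nhdsWithin_le_of_mem <|
    mem_of_superset (Ioo_mem_nhdsGT hx.2) (Ioo_subset_Icc_self.trans (Icc_subset_Icc_left hx.1))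
  have hRpos : ∀ᶠ y in 𝓝[>] x, 0 < R y :=
    hle ((S.continuousOn_residual hh x hxIcc).eventually (eventually_gt_nhds hR))
  have hlt : ∀ᶠ y in 𝓝[>] x, f' y < r :=
    hle ((S.continuousOn_deriv x hxIcc).eventually (eventually_lt_nhds (h₀ ▸ hr)))
  have hflat : ∀ᶠ y in 𝓝[>] x, f' y = 0 := by
    filter_upwards [hRpos, hlt, Ioo_mem_nhdsGT hx.2] with y hRy hry hy
    exact S.deriv_eq_zero_of_residual_pos ⟨hx.1.trans_lt hy.1, hy.2⟩ hRy hry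
  exact (mem_nhdsGT_iff_exists_mem_Ioc_Ioo_subset hx.2).1 hflat

theorem apply_le_mul_of_deriv_eq_zero (S : IsHJBSolution b σ ϱ r m ε h f f' f'') (hσ : σ ≠ 0)
    (hr : 0 < r) (hh : ContinuousOn h (Icc 0 b)) (hmono : MonotoneOn h (Icc 0 b)) {c : ℝ}
    (hc : c ∈ Ioo 0 b) (h₀ : f' c = 0) : h c ≤ ϱ * f c := by
  -- Otherwise the residual `h - ϱ f c` stays positive along the flat piece starting at `c`,
  -- so by continuous induction `f'` vanishes up to `b`.
  by_contra! hlt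
  set s := {y | f' y = 0 ∧ f y = f c}
  have hclosed : IsClosed (s ∩ Icc c b) := by
    have hsub : Icc c b ⊆ Icc 0 b := Icc_subset_Icc_left hc.1.le
    have h₁ := (S.continuousOn_deriv.mono hsub).preimage_isClosed_of_isClosed isClosed_Icc
      (isClosed_singleton (x := 0))
    have h₂ := (S.continuousOn.mono hsub).preimage_isClosed_of_isClosed isClosed_Icc
      (isClosed_singleton (x := f c))
    convert h₁.inter h₂ using 1
    ext y
    simp only [s, mem_inter_iff, mem_ofPred_eq, mem_preimage, mem_singleton_iff]
    tauto
  have hstep : ∀ x ∈ s ∩ Ico c b, s ∈ 𝓝[>] x := by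
    rintro x ⟨⟨hx₀, hxc⟩, hcx, hxb⟩
    have hx : x ∈ Ioo 0 b := ⟨hc.1.trans_le hcx, hxb⟩
    have hR : 0 < R x := by
      rw [hjbResidual_pos_iff_of_flat hσ hx₀ (S.deriv2_eq_zero_of_deriv_eq_zero hr.le hx hx₀),
        hxc]
      exact hlt.trans_le (hmono (Ioo_subset_Icc_self hc) (Ioo_subset_Icc_self hx) hcx)
    obtain ⟨u, hu, hflat⟩ := S.exists_Ioo_deriv_eq_zero hr hh ⟨hx.1.le, hxb⟩ hx₀ hR
    refine (mem_nhdsGT_iff_exists_mem_Ioc_Ioo_subset hxb).2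
      ⟨u, hu, fun y hy => ⟨hflat y hy, ?_⟩⟩
    rw [← hxc]
    exact S.eq_of_forall_deriv_eq_zero hx.1.le hy.1.le (hy.2.le.trans hu.2)
      fun t ht => hflat t ⟨ht.1, ht.2.trans hy.2⟩
  have hb : b ∈ s := hclosed.Icc_subset_of_forall_mem_nhdsWithin ⟨h₀, rfl⟩ hstep
    (right_mem_Icc.2 hc.2.le)
  exact hr.ne' (S.deriv_right ▸ hb.1)

theorem residual_eq_zero_of_deriv_eq_zero (S : IsHJBSolution b σ ϱ r m ε h f f' f'')
    (hσ : σ ≠ 0) (hr : 0 < r) (hh : ContinuousOn h (Icc 0 b)) (hmono : StrictMonoOn h (Icc 0 b))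
    (hx : x ∈ Ico 0 b) (h₀ : f' x = 0) : R x = 0 := by
  refine le_antisymm (not_lt.1 fun hR => ?_)
    (S.residual_nonneg (hx.1.trans_lt hx.2) hh (Ico_subset_Icc_self hx))
  obtain ⟨u, hu, hflat⟩ := S.exists_Ioo_deriv_eq_zero hr hh hx h₀ hR
  -- On the flat piece `(x, u)` take `p < q`: `ϱ f ≤ h` at `p`, hence `ϱ f < h` at `q`.
  obtain ⟨p, hxp, hpu⟩ := exists_between hu.1
  obtain ⟨q, hpq, hqu⟩ := exists_between hpu
  have hp : p ∈ Ioo 0 b := ⟨hx.1.trans_lt hxp, hpu.trans_le hu.2⟩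
  have hq : q ∈ Ioo 0 b := ⟨hp.1.trans hpq, hqu.trans_le hu.2⟩
  have hfp : f' p = 0 := hflat p ⟨hxp, hpu⟩
  have hfq : f' q = 0 := hflat q ⟨hxp.trans hpq, hqu⟩
  have hp_le : ϱ * f p ≤ h p :=
    (hjbResidual_nonneg_iff_of_flat hσ hfp (S.deriv2_eq_zero_of_deriv_eq_zero hr.le hp hfp)).1
      (S.residual_nonneg (hx.1.trans_lt hx.2) hh (Ioo_subset_Icc_self hp))
  have hfpq : f q = f p := S.eq_of_forall_deriv_eq_zero hp.1.le hpq.le hq.2.le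
    fun t ht => hflat t ⟨hxp.trans ht.1, ht.2.trans hqu⟩
  have hq_le := S.apply_le_mul_of_deriv_eq_zero hσ hr hh hmono.monotoneOn hq hfq
  have hhpq := hmono (Ioo_subset_Icc_self hp) (Ioo_subset_Icc_self hq) hpq
  rw [hfpq] at hq_le
  linarith

theorem residual_eq_zero_of_deriv_lt (S : IsHJBSolution b σ ϱ r m ε h f f' f'') (hσ : σ ≠ 0)
    (hr : 0 < r) (hh : ContinuousOn h (Icc 0 b)) (hmono : StrictMonoOn h (Icc 0 b))
    (hx : x ∈ Ico 0 b) (hlt : f' x < r) : R x = 0 := by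
  rcases (S.deriv_mem_Icc hr.le (Ico_subset_Icc_self hx)).1.eq_or_lt with h₀ | hpos
  · exact S.residual_eq_zero_of_deriv_eq_zero hσ hr hh hmono hx h₀.symm
  have hx₀ : 0 < x := hx.1.lt_of_ne <| by rintro rfl; exact hpos.ne' S.deriv_left
  exact S.residual_eq_zero_of_mem_Ioo ⟨hx₀, hx.2⟩ hpos hlt

end IsHJBSolution

section Comparison

variable {b σ ϱ r m εu εv η x₀ : ℝ} {h u u' u'' v v' v'' : ℝ → ℝ}

theorem IsHJBSolution.deriv_conditions_of_isMaxOn (hb : 0 < b) (hη : 0 < η)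
    (Su : IsHJBSolution b σ ϱ r m εu h u u' u'') (Sv : IsHJBSolution b σ ϱ r m εv h v v' v'')
    (hx₀ : x₀ ∈ Icc 0 b) (hmax : IsMaxOn (fun x => u x - v x - η * x ^ 2) (Icc 0 b) x₀) :
    x₀ < b ∧ u' x₀ = v' x₀ + 2 * η * x₀ ∧ u'' x₀ ≤ v'' x₀ + 2 * η := by
  have hψ : ∀ x ∈ Icc 0 b, HasDerivWithinAt (fun x => u x - v x - η * x ^ 2)
      (u' x - v' x - 2 * η * x) (Icc 0 b) x := fun x hx => by
    refine (((Su.hasDerivWithinAt hx).sub (Sv.hasDerivWithinAt hx)).sub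
      (((hasDerivAt_pow 2 x).const_mul η).hasDerivWithinAt)).congr_deriv ?_
    push_cast
    ring
  have hψ' : HasDerivWithinAt (fun x => u' x - v' x - 2 * η * x)
      (u'' x₀ - v'' x₀ - 2 * η) (Icc 0 b) x₀ := by
    refine (((Su.hasDerivWithinAt_deriv hx₀).sub (Sv.hasDerivWithinAt_deriv hx₀)).sub
      (((hasDerivAt_id x₀).const_mul (2 * η)).hasDerivWithinAt)).congr_deriv ?_
    ring
  have hx₀b : x₀ < b := by
    refine hx₀.2.lt_of_ne fun hx₀b => ?_
    subst hx₀b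
    have := deriv_nonneg_of_isMaxOn_right hb (hψ x₀ hx₀) hmax
    rw [Su.deriv_right, Sv.deriv_right] at this
    nlinarith
  have hd : u' x₀ - v' x₀ - 2 * η * x₀ = 0 := by
    rcases hx₀.1.eq_or_lt with rfl | h₀
    · simp [Su.deriv_left, Sv.deriv_left]
    · have hnhds : Icc 0 b ∈ 𝓝 x₀ := Icc_mem_nhds h₀ hx₀b
      exact (hmax.isLocalMax hnhds).hasDerivAt_eq_zero ((hψ x₀ hx₀).hasDerivAt hnhds)
  have hd₂ := deriv2_nonpos_of_isMaxOn hψ hψ' ⟨hx₀.1, hx₀b⟩ hmax hd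
  exact ⟨hx₀b, by linarith, by linarith⟩

theorem IsHJBSolution.mul_sub_le_of_deriv_conditions (hb : 0 < b) (hσ : σ ≠ 0) (hr : 0 < r)
    (hh : ContinuousOn h (Icc 0 b)) (hmono : StrictMonoOn h (Icc 0 b))
    (hεu : 0 ≤ εu) (hεv : 0 ≤ εv) (hη : 0 < η)
    (Su : IsHJBSolution b σ ϱ r m εu h u u' u'') (Sv : IsHJBSolution b σ ϱ r m εv h v v' v'')
    (hx₀ : x₀ ∈ Ico 0 b) (hd₁ : u' x₀ = v' x₀ + 2 * η * x₀)
    (hd₂ : u'' x₀ ≤ v'' x₀ + 2 * η) :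
    ϱ * (u x₀ - v x₀) ≤ σ ^ 2 * εu * r ^ 2 / 2 + η * (σ ^ 2 + 2 * |m| * b) := by
  have hx₀' : x₀ ∈ Icc 0 b := Ico_subset_Icc_self hx₀
  obtain ⟨hu₀, hur⟩ := Su.deriv_mem_Icc hr.le hx₀'
  have hvr := (Sv.deriv_mem_Icc hr.le hx₀').2
  have hvlt : v' x₀ < r := by
    refine hvr.lt_of_ne fun hv => ?_
    have hx₀0 : x₀ = 0 := le_antisymm (by nlinarith) hx₀.1
    rw [hx₀0, Sv.deriv_left] at hv
    exact hr.ne hv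
  have hRu := Su.residual_nonneg hb hh hx₀'
  have hRv := Sv.residual_eq_zero_of_deriv_lt hσ hr hh hmono hx₀ hvlt
  rw [← mul_nonneg_iff_of_pos_left (by positivity : 0 < σ ^ 2 / 2), hjbResidual_eq hσ] at hRu
  have hRv' := congrArg (σ ^ 2 / 2 * ·) hRv
  rw [hjbResidual_eq hσ, mul_zero] at hRv'
  have hdrift : m * u' x₀ - m * v' x₀ ≤ |m| * (2 * η * b) := by
    rw [hd₁, ← mul_sub, add_sub_cancel_left]
    calc m * (2 * η * x₀) ≤ |m| * (2 * η * x₀) :=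
          mul_le_mul_of_nonneg_right (le_abs_self m) (mul_nonneg (by positivity) hx₀.1)
      _ ≤ |m| * (2 * η * b) :=
          mul_le_mul_of_nonneg_left (mul_le_mul_of_nonneg_left hx₀.2.le (by positivity))
            (abs_nonneg m)
  have hσ2 : 0 ≤ σ ^ 2 / 2 := by positivity
  have hdiffusion := mul_le_mul_of_nonneg_left hd₂ hσ2
  have hpenalty := mul_le_mul_of_nonneg_left (pow_le_pow_left₀ hu₀ hur 2)
    (mul_nonneg hσ2 hεu)
  have hv'sq := mul_nonneg (mul_nonneg hσ2 hεv) (sq_nonneg (v' x₀))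
  linarith

theorem IsHJBSolution.comparison (hb : 0 < b) (hσ : σ ≠ 0) (hϱ : 0 < ϱ) (hr : 0 < r)
    (hh : ContinuousOn h (Icc 0 b)) (hmono : StrictMonoOn h (Icc 0 b))
    (hεu : 0 ≤ εu) (hεv : 0 ≤ εv)
    (Su : IsHJBSolution b σ ϱ r m εu h u u' u'') (Sv : IsHJBSolution b σ ϱ r m εv h v v' v'')
    {x : ℝ} (hx : x ∈ Icc 0 b) : u x ≤ v x + σ ^ 2 * εu * r ^ 2 / (2 * ϱ) := by
  set K := σ ^ 2 + 2 * |m| * b + ϱ * b ^ 2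
  have hK : 0 < K := by positivity
  have hpenalized : ∀ η > 0, ϱ * (u x - v x) ≤ σ ^ 2 * εu * r ^ 2 / 2 + η * K := by
    intro η hη
    obtain ⟨x₀, hx₀, hmax⟩ := isCompact_Icc.exists_isMaxOn (nonempty_Icc.2 hb.le)
      (show ContinuousOn (fun x => u x - v x - η * x ^ 2) (Icc 0 b) from
        (Su.continuousOn.sub Sv.continuousOn).sub (by fun_prop))
    obtain ⟨hx₀b, hd₁, hd₂⟩ := Su.deriv_conditions_of_isMaxOn hb hη Sv hx₀ hmax
    have hest := Su.mul_sub_le_of_deriv_conditions hb hσ hr hh hmono hεu hεv hη Sv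
      ⟨hx₀.1, hx₀b⟩ hd₁ hd₂
    have hψ : u x - v x - η * x ^ 2 ≤ u x₀ - v x₀ - η * x₀ ^ 2 := hmax hx
    have hxb : x ^ 2 ≤ b ^ 2 := pow_le_pow_left₀ hx.1 hx.2 2
    nlinarith [mul_le_mul_of_nonneg_left hψ hϱ.le,
      mul_le_mul_of_nonneg_left hxb (mul_pos hϱ hη).le,
      mul_nonneg (mul_pos hϱ hη).le (sq_nonneg x₀)]
  have hlim : ϱ * (u x - v x) ≤ σ ^ 2 * εu * r ^ 2 / 2 :=
    le_of_forall_pos_le_add fun δ hδ => by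
      simpa [div_mul_cancel₀ δ hK.ne'] using hpenalized (δ / K) (div_pos hδ hK)
  rw [← sub_le_iff_le_add', le_div_iff₀ (by positivity)]
  linarith

end Comparison

theorem stmt17_general (b σ ϱ r m : ℝ) (hb : 0 < b) (hσ : 0 < σ) (hϱ : 0 < ϱ) (hr : 0 < r)
    (h : ℝ → ℝ)
    (hLip : ∃ K : NNReal, LipschitzOnWith K h (Icc (0:ℝ) b))
    (hmono : StrictMonoOn h (Icc (0:ℝ) b)) :
    ∃ C > (0:ℝ), ∀ ε > (0:ℝ), ∀ fe fe' fe'' f0 f0' f0'' : ℝ → ℝ,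
      IsHJBSolution b σ ϱ r m ε h fe fe' fe'' →
      IsHJBSolution b σ ϱ r m 0 h f0 f0' f0'' →
      ∀ x ∈ Icc (0:ℝ) b, f0 x ≤ fe x ∧ fe x ≤ f0 x + C * ε := by
  obtain ⟨K, hK⟩ := hLip
  refine ⟨σ ^ 2 * r ^ 2 / (2 * ϱ), by positivity,
    fun ε hε fe fe' fe'' f0 f0' f0'' Se S0 x hx => ?_⟩
  constructor
  · simpa using S0.comparison hb hσ.ne' hϱ hr hK.continuousOn hmono le_rfl hε.le Se hx
  · convert Se.comparison hb hσ.ne' hϱ hr hK.continuousOn hmono hε.le le_rfl S0 hx using 2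
    ring

/-- There exists C > 0 such that for every ε ∈ (0,∞) and every
x ∈ [0,b], if f_ε is a C² solution of HJB(ε) and f₀ is a C² solution of HJB(0),
then f₀(x) ≤ f_ε(x) ≤ f₀(x) + C·ε. -/
theorem stmt17 (b σ ϱ r m : ℝ) (hb : 0 < b) (hσ : 0 < σ) (hϱ : 0 < ϱ) (hr : 0 < r)
    (h : ℝ → ℝ)
    (hLip : ∃ K : NNReal, LipschitzOnWith K h (Icc (0:ℝ) b))
    (hconv : ConvexOn ℝ (Icc (0:ℝ) b) h)
    (hmono : StrictMonoOn h (Icc (0:ℝ) b)) (h0 : h 0 = 0) :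
    ∃ C > (0:ℝ), ∀ ε > (0:ℝ), ∀ fe fe' fe'' f0 f0' f0'' : ℝ → ℝ,
      IsHJBSolution b σ ϱ r m ε h fe fe' fe'' →
      IsHJBSolution b σ ϱ r m 0 h f0 f0' f0'' →
      ∀ x ∈ Icc (0:ℝ) b, f0 x ≤ fe x ∧ fe x ≤ f0 x + C * ε :=
  stmt17_general b σ ϱ r m hb hσ hϱ hr h hLip hmono
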